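/- Let ν and ν' be two equivalent σ-finite measures on a space X (each absolutely continuous with respect to the other), and let Γ ↷ X be a measurable action of a countable discrete group. If Y ⊆ X is a measurable subset of positive finite ν-measure and positive finite ν'-measure, then Y is a domain of asymptotic expansion with respect to ν if and only if Y is a domain of asymptotic expansion with respect to ν'. -/

import Mathlib

open MeasureTheory Set Filter Pointwise

/-- The union `S · A = ⋃ s ∈ S, s • A` of the translates of `A` by elements of the
finite set `S ⊆ Γ`. -/
def finSMul {Γ X : Type*} [Group Γ] [MulAction Γ X] (S : Finset Γ) (A : Set X) : Set X :=
  ⋃ s ∈ S, s • A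

/-- `S` is a finite symmetric subset of `Γ` containing the identity. -/
def SymmFin {Γ : Type*} [Group Γ] (S : Finset Γ) : Prop :=
  (1 : Γ) ∈ S ∧ ∀ s ∈ S, s⁻¹ ∈ S

/-- The `S`-boundary `∂_S A = (S·A) \ A`. -/
def finBdry {Γ X : Type*} [Group Γ] [MulAction Γ X] (S : Finset Γ) (A : Set X) : Set X :=
  finSMul S A \ A

/-- `Y` is a domain of `(c,S)`-expansion: `ν((S·A) ∩ Y) > (1+c)·ν(A)` for every
measurable `A ⊆ Y` with `0 < ν(A) ≤ ν(Y)/2`. -/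
def ExpandsOn {Γ X : Type*} [Group Γ] [MulAction Γ X] [MeasurableSpace X]
    (ν : MeasureTheory.Measure X) (Y : Set X) (c : ℝ) (S : Finset Γ) : Prop :=
  ∀ A : Set X, MeasurableSet A → A ⊆ Y → 0 < ν A → ν A ≤ ν Y / 2 →
    (1 + ENNReal.ofReal c) * ν A < ν (finSMul S A ∩ Y)

/-- `Y` is a domain of expansion: `(c,S)`-expansion for some `c > 0` and some finite
symmetric `S ∋ 1`. -/
def ExpDomain (Γ : Type*) {X : Type*} [Group Γ] [MulAction Γ X] [MeasurableSpace X]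
    (ν : MeasureTheory.Measure X) (Y : Set X) : Prop :=
  ∃ c : ℝ, 0 < c ∧ ∃ S : Finset Γ, SymmFin S ∧ ExpandsOn ν Y c S

/-- The `(α,c,S)` asymptotic-expansion estimate on `Y`: `ν((S·A) ∩ Y) > (1+c)·ν(A)` for
every measurable `A ⊆ Y` with `α·ν(Y) ≤ ν(A) ≤ ν(Y)/2`. -/
def AsymExpandsOn {Γ X : Type*} [Group Γ] [MulAction Γ X] [MeasurableSpace X]
    (ν : MeasureTheory.Measure X) (Y : Set X) (α c : ℝ) (S : Finset Γ) : Prop :=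
  ∀ A : Set X, MeasurableSet A → A ⊆ Y → ENNReal.ofReal α * ν Y ≤ ν A → ν A ≤ ν Y / 2 →
    (1 + ENNReal.ofReal c) * ν A < ν (finSMul S A ∩ Y)

/-- `Y` is a domain of asymptotic expansion. -/
def AsymExpDomain (Γ : Type*) {X : Type*} [Group Γ] [MulAction Γ X] [MeasurableSpace X]
    (ν : MeasureTheory.Measure X) (Y : Set X) : Prop :=
  ∀ α : ℝ, 0 < α → α ≤ 1 / 2 →
    ∃ c : ℝ, 0 < c ∧ ∃ S : Finset Γ, SymmFin S ∧ AsymExpandsOn ν Y α c S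

/-- The action of `Γ` on the probability space `(X,ν)` is strongly ergodic: every almost
invariant sequence of measurable sets is asymptotically trivial. -/
def StronglyErgodic (Γ : Type*) {X : Type*} [Group Γ] [MulAction Γ X] [MeasurableSpace X]
    (ν : MeasureTheory.Measure X) : Prop :=
  ∀ C : ℕ → Set X, (∀ n, MeasurableSet (C n)) →
    (∀ γ : Γ, Filter.Tendsto (fun n => ν (symmDiff (C n) (γ • C n))) Filter.atTop (nhds 0)) →
    Filter.Tendsto (fun n => ν (C n) * (1 - ν (C n))) Filter.atTop (nhds 0)

/-- The action of `Γ` on `(X,ν)` is measure-class-preserving. -/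
def MeasClassPres (Γ : Type*) {X : Type*} [Group Γ] [MulAction Γ X] [MeasurableSpace X]
    (ν : MeasureTheory.Measure X) : Prop :=
  ∀ (γ : Γ) (A : Set X), MeasurableSet A → (ν (γ • A) = 0 ↔ ν A = 0)

/-- The action of `Γ` on `(X,ν)` is ergodic: every invariant measurable set is null or
conull. -/
def ErgodicAct (Γ : Type*) {X : Type*} [Group Γ] [MulAction Γ X] [MeasurableSpace X]
    (ν : MeasureTheory.Measure X) : Prop :=
  ∀ A : Set X, MeasurableSet A → (∀ γ : Γ, γ • A = A) → ν A = 0 ∨ ν Aᶜ = 0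

/-- `W` admits an exhaustion by measurable subsets satisfying `P`. -/
def ExhaustionBy {X : Type*} [MeasurableSpace X] (ν : MeasureTheory.Measure X)
    (W : Set X) (P : Set X → Prop) : Prop :=
  ∃ Y : ℕ → Set X, Monotone Y ∧ (∀ n, MeasurableSet (Y n)) ∧ (∀ n, Y n ⊆ W) ∧
    (∀ n, P (Y n)) ∧ ν (W \ ⋃ n, Y n) = 0

/-!
Asymptotic expansion of `Y` is equivalent to a filling property with absolute thresholds: for
every `ε > 0` some finite symmetric `S` has `ν(Y \ S·A) < ε` whenever `A ⊆ Y` and `ν(A) ≥ ε`.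
Expansion gives filling, since otherwise the `S^m`-neighbourhoods of `A` and of `Y \ S^{2m}·A`
would be disjoint subsets of `Y` of measure more than `ν(Y)/2` each; filling gives expansion with
constant `1/2`. Filling passes from `ν` to `ν'`, because on the finite part `Y` the absolute
continuity `ν' ≪ ν` is uniform: `ν`-small sets are `ν'`-small.
-/

open scoped ENNReal NNReal Topology

section Translates

variable {Γ X : Type*} [Group Γ] [MulAction Γ X] {S T : Finset Γ} {A B D : Set X}

lemma mem_finSMul {x : X} : x ∈ finSMul S A ↔ ∃ s ∈ S, x ∈ s • A := by
  simp [finSMul]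

lemma finSMul_subset_finSMul (hST : S ⊆ T) (hAB : A ⊆ B) : finSMul S A ⊆ finSMul T B :=
  Set.biUnion_mono hST fun _ _ => Set.smul_set_mono hAB

lemma subset_finSMul (h1 : (1 : Γ) ∈ S) (A : Set X) : A ⊆ finSMul S A := fun x hx =>
  mem_finSMul.2 ⟨1, h1, by simpa using hx⟩

lemma finSMul_finSMul [DecidableEq Γ] (S T : Finset Γ) (A : Set X) :
    finSMul S (finSMul T A) = finSMul (S * T) A := by
  ext x
  simp only [finSMul, Set.smul_set_iUnion₂, Set.mem_iUnion, Finset.mem_mul, exists_prop]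
  constructor
  · rintro ⟨s, hs, t, ht, hx⟩
    exact ⟨s * t, ⟨s, hs, t, ht, rfl⟩, by rwa [mul_smul]⟩
  · rintro ⟨_, ⟨s, hs, t, ht, rfl⟩, hx⟩
    exact ⟨s, hs, t, ht, by rwa [← mul_smul]⟩

lemma SymmFin.pow [DecidableEq Γ] (hS : SymmFin S) (n : ℕ) : SymmFin (S ^ n) := by
  refine ⟨Finset.one_mem_pow hS.1, fun s hs => ?_⟩
  have hinv : S⁻¹ ⊆ S := fun s hs => by simpa using hS.2 _ (Finset.mem_inv'.1 hs)
  have : s⁻¹ ∈ (S ^ n)⁻¹ := Finset.inv_mem_inv hs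
  rw [← inv_pow] at this
  exact Finset.pow_subset_pow_left hinv this

lemma disjoint_finSMul_of_disjoint [DecidableEq Γ] (hS : SymmFin S)
    (h : Disjoint D (finSMul (S * S) A)) : Disjoint (finSMul S D) (finSMul S A) := by
  refine Set.disjoint_left.2 fun x hxD hxA => ?_
  obtain ⟨s, hs, d, hd, rfl⟩ := mem_finSMul.1 hxD
  obtain ⟨t, ht, a, ha, hsa⟩ := mem_finSMul.1 hxA
  refine Set.disjoint_left.1 h hd
    (mem_finSMul.2 ⟨s⁻¹ * t, Finset.mul_mem_mul (hS.2 s hs) ht, a, ha, ?_⟩)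
  simp only at hsa ⊢
  rw [mul_smul, hsa, inv_smul_smul]

lemma MeasurableSet.finSMul [MeasurableSpace X] (hmeas : ∀ γ : Γ, Measurable fun x : X => γ • x)
    (S : Finset Γ) (hA : MeasurableSet A) : MeasurableSet (finSMul S A) :=
  S.measurableSet_biUnion fun s _ => Set.preimage_smul_inv s A ▸ hmeas s⁻¹ hA

end Translates

lemma MeasureTheory.Measure.AbsolutelyContinuous.exists_pos_forall_measure_lt
    {X : Type*} [MeasurableSpace X] {μ μ' : Measure X} [IsFiniteMeasure μ'] [SigmaFinite μ]
    (h : μ' ≪ μ) {ε : ℝ≥0∞} (hε : ε ≠ 0) : ∃ δ > 0, ∀ s, μ s < δ → μ' s < ε := by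
  obtain ⟨δ, hδ, hsmall⟩ :=
    exists_pos_setLIntegral_lt_of_measure_lt (Measure.lintegral_rnDeriv_lt_top μ' μ).ne hε
  exact ⟨δ, hδ, fun s hs => Measure.setLIntegral_rnDeriv h s ▸ hsmall s hs⟩

lemma exists_lt_one_add_ofReal_pow_mul {c : ℝ} (hc : 0 < c) {a b : ℝ≥0∞} (ha : a ≠ ∞)
    (hb : b ≠ 0) : ∃ m : ℕ, a < (1 + ENNReal.ofReal c) ^ m * b := by
  obtain ⟨m, hm⟩ := pow_unbounded_of_one_lt (a / b).toReal (lt_add_of_pos_right 1 hc)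
  refine ⟨m, (ENNReal.div_lt_iff (Or.inl hb) (Or.inr ha)).1 ?_⟩
  rwa [← ENNReal.ofReal_one, ← ENNReal.ofReal_add zero_le_one hc.le, ← ENNReal.ofReal_pow
    (by positivity), ENNReal.lt_ofReal_iff_toReal_lt (ENNReal.div_ne_top ha hb)]

lemma one_add_ofReal_half_mul_lt {a x w d : ℝ≥0∞} (ha : a ≠ ∞) (hx : x ≤ a / 2)
    (hd : d < a / 4) (hw : a ≤ w + d) : (1 + ENNReal.ofReal (1 / 2)) * x < w := by
  have hhalf : ENNReal.ofReal (1 / 2) = ((1 / 2 : ℝ≥0) : ℝ≥0∞) := by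
    rw [ENNReal.ofReal, Real.toNNReal_div zero_le_one, Real.toNNReal_one, Real.toNNReal_ofNat]
  rw [hhalf]
  lift a to ℝ≥0 using ha
  lift x to ℝ≥0 using ne_top_of_le_ne_top (by simp [ENNReal.div_eq_top]) hx
  lift d to ℝ≥0 using hd.ne_top
  induction w using ENNReal.recTopCoe with
  | top => exact_mod_cast ENNReal.coe_lt_top
  | coe w =>
    rw [← ENNReal.coe_two, ← ENNReal.coe_div two_ne_zero] at hx
    rw [← ENNReal.coe_ofNat, ← ENNReal.coe_div (by norm_num)] at hd
    norm_cast at hx hd hw ⊢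
    rw [← NNReal.coe_le_coe] at hx hw
    rw [← NNReal.coe_lt_coe] at hd ⊢
    push_cast at hx hd hw ⊢
    linarith

section Expansion

variable {Γ X : Type*} [Group Γ] [MulAction Γ X] [MeasurableSpace X] {ν : Measure X}
  {Y A : Set X} {S : Finset Γ} {β c : ℝ}

def FillsOn (ν : Measure X) (Y : Set X) (ε : ℝ≥0∞) (S : Finset Γ) : Prop :=
  ∀ A : Set X, MeasurableSet A → A ⊆ Y → ε ≤ ν A → ν (Y \ finSMul S A) < ε

def FillingDomain (Γ : Type*) [Group Γ] [MulAction Γ X] (ν : Measure X) (Y : Set X) : Prop :=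
  ∀ ε : ℝ≥0∞, 0 < ε → ∃ S : Finset Γ, SymmFin S ∧ FillsOn ν Y ε S

lemma FillsOn.mono {η ε : ℝ≥0∞} (h : FillsOn ν Y η S) (hηε : η ≤ ε) : FillsOn ν Y ε S :=
  fun A hA hAY hεA => (h A hA hAY (hηε.trans hεA)).trans_le hηε

variable [DecidableEq Γ]

lemma AsymExpandsOn.pow_mul_le_measure (hmeas : ∀ γ : Γ, Measurable fun x : X => γ • x)
    (hYm : MeasurableSet Y) (hexp : AsymExpandsOn ν Y β c S) (h1 : (1 : Γ) ∈ S)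
    (hA : MeasurableSet A) (hAY : A ⊆ Y) (hβA : ENNReal.ofReal β * ν Y ≤ ν A) (n : ℕ)
    (hhalf : ν (finSMul (S ^ n) A ∩ Y) ≤ ν Y / 2) :
    (1 + ENNReal.ofReal c) ^ n * ν A ≤ ν (finSMul (S ^ n) A ∩ Y) := by
  induction n with
  | zero => simpa [finSMul] using measure_mono (Set.subset_inter subset_rfl hAY)
  | succ n ih =>
    set An := finSMul (S ^ n) A ∩ Y
    have hAn_succ : finSMul S An ∩ Y ⊆ finSMul (S ^ (n + 1)) A ∩ Y := by
      rw [pow_succ', ← finSMul_finSMul]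
      exact Set.inter_subset_inter_left _ (finSMul_subset_finSMul subset_rfl Set.inter_subset_left)
    have hAn_le : ν An ≤ ν Y / 2 := (measure_mono (Set.inter_subset_inter_left _
      (finSMul_subset_finSMul (Finset.pow_subset_pow_right h1 n.le_succ) subset_rfl))).trans hhalf
    have hA_le : ν A ≤ ν An :=
      measure_mono (Set.subset_inter (subset_finSMul (Finset.one_mem_pow h1) A) hAY)
    have hgrow := hexp An ((hA.finSMul hmeas _).inter hYm) Set.inter_subset_right
      (hβA.trans hA_le) hAn_le
    calc (1 + ENNReal.ofReal c) ^ (n + 1) * ν A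
        = (1 + ENNReal.ofReal c) * ((1 + ENNReal.ofReal c) ^ n * ν A) := by ring
      _ ≤ (1 + ENNReal.ofReal c) * ν An := by gcongr; exact ih hAn_le
      _ ≤ ν (finSMul (S ^ (n + 1)) A ∩ Y) := hgrow.le.trans (measure_mono hAn_succ)

lemma AsymExpandsOn.half_lt_measure (hmeas : ∀ γ : Γ, Measurable fun x : X => γ • x)
    (hYm : MeasurableSet Y) (hexp : AsymExpandsOn ν Y β c S) (h1 : (1 : Γ) ∈ S)
    {m : ℕ} (hm : ν Y / 2 < (1 + ENNReal.ofReal c) ^ m * (ENNReal.ofReal β * ν Y))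
    (hA : MeasurableSet A) (hAY : A ⊆ Y) (hβA : ENNReal.ofReal β * ν Y ≤ ν A) :
    ν Y / 2 < ν (finSMul (S ^ m) A ∩ Y) := by
  by_contra! hhalf
  exact (hm.trans_le (by gcongr)).not_ge
    ((hexp.pow_mul_le_measure hmeas hYm h1 hA hAY hβA m hhalf).trans hhalf)

lemma AsymExpandsOn.fillsOn_pow (hmeas : ∀ γ : Γ, Measurable fun x : X => γ • x)
    (hYm : MeasurableSet Y) (hexp : AsymExpandsOn ν Y β c S) (hS : SymmFin S) {m : ℕ}
    (hm : ν Y / 2 < (1 + ENNReal.ofReal c) ^ m * (ENNReal.ofReal β * ν Y)) :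
    FillsOn ν Y (ENNReal.ofReal β * ν Y) (S ^ (m + m)) := by
  intro A hA hAY hβA
  by_contra! hβD
  have hD : MeasurableSet (Y \ finSMul (S ^ (m + m)) A) := hYm.diff (hA.finSMul hmeas _)
  have hdisj : Disjoint (finSMul (S ^ m) (Y \ finSMul (S ^ (m + m)) A) ∩ Y)
      (finSMul (S ^ m) A ∩ Y) := by
    refine (disjoint_finSMul_of_disjoint (hS.pow m) ?_).mono Set.inter_subset_left
      Set.inter_subset_left
    rw [← pow_add]
    exact Set.disjoint_sdiff_left
  have hgrowD := hexp.half_lt_measure hmeas hYm hS.1 hm hD Set.sdiff_subset hβD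
  have hgrowA := hexp.half_lt_measure hmeas hYm hS.1 hm hA hAY hβA
  refine (ENNReal.add_halves (ν Y)).not_lt ?_
  calc ν Y / 2 + ν Y / 2 < _ := ENNReal.add_lt_add hgrowD hgrowA
    _ = ν (finSMul (S ^ m) (Y \ finSMul (S ^ (m + m)) A) ∩ Y ∪ finSMul (S ^ m) A ∩ Y) :=
      (measure_union hdisj ((hA.finSMul hmeas _).inter hYm)).symm
    _ ≤ ν Y := measure_mono (Set.union_subset Set.inter_subset_right Set.inter_subset_right)

end Expansion

section Domains

variable {Γ X : Type*} [Group Γ] [MulAction Γ X] [MeasurableSpace X] {ν ν' : Measure X}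
  {Y : Set X}

lemma AsymExpDomain.fillingDomain (h : AsymExpDomain Γ ν Y)
    (hmeas : ∀ γ : Γ, Measurable fun x : X => γ • x) (hYm : MeasurableSet Y) (hY0 : ν Y ≠ 0)
    (hYfin : ν Y ≠ ∞) : FillingDomain Γ ν Y := by
  classical
  intro ε hε
  have hlim : Tendsto (fun β : ℝ => ENNReal.ofReal β * ν Y) (𝓝 0) (𝓝 0) := by
    simpa using ENNReal.Tendsto.mul_const (ENNReal.tendsto_ofReal (tendsto_id (x := 𝓝 (0 : ℝ))))
      (Or.inr hYfin)
  have hsmall : ∀ᶠ β in 𝓝[>] (0 : ℝ), β ≤ 1 / 2 ∧ ENNReal.ofReal β * ν Y < ε :=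
    nhdsWithin_le_nhds ((eventually_le_nhds (by norm_num)).and (hlim.eventually_lt_const hε))
  obtain ⟨β, ⟨hβhalf, hβε⟩, hβ⟩ := (hsmall.and self_mem_nhdsWithin).exists
  obtain ⟨c, hc, S, hS, hexp⟩ := h β hβ hβhalf
  obtain ⟨m, hm⟩ := exists_lt_one_add_ofReal_pow_mul hc (ENNReal.div_ne_top hYfin two_ne_zero)
    (mul_ne_zero (ENNReal.ofReal_pos.2 hβ).ne' hY0)
  exact ⟨S ^ (m + m), hS.pow _, (hexp.fillsOn_pow hmeas hYm hS hm).mono hβε.le⟩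

lemma FillingDomain.asymExpDomain (h : FillingDomain Γ ν Y) (hY0 : ν Y ≠ 0) (hYfin : ν Y ≠ ∞) :
    AsymExpDomain Γ ν Y := by
  intro α hα hαhalf
  have hε : 0 < ENNReal.ofReal α * ν Y / 2 :=
    ENNReal.half_pos (mul_ne_zero (ENNReal.ofReal_pos.2 hα).ne' hY0)
  obtain ⟨S, hS, hfill⟩ := h _ hε
  refine ⟨1 / 2, one_half_pos, S, hS, fun A hA hAY hαA hAhalf => ?_⟩
  have hquarter : ENNReal.ofReal α * ν Y / 2 ≤ ν Y / 4 :=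
    calc ENNReal.ofReal α * ν Y / 2 ≤ 2⁻¹ * ν Y / 2 := by
          gcongr
          exact (ENNReal.ofReal_le_ofReal hαhalf).trans_eq
            (by rw [one_div, ENNReal.ofReal_inv_of_pos two_pos]; simp)
      _ = ν Y / 4 := by
          rw [ENNReal.div_eq_inv_mul, ENNReal.div_eq_inv_mul, ← mul_assoc,
            ← ENNReal.mul_inv (by simp) (by simp)]
          norm_num
  refine one_add_ofReal_half_mul_lt hYfin hAhalf
    ((hfill A hA hAY (ENNReal.half_le_self.trans hαA)).trans_le hquarter) ?_
  rw [Set.inter_comm]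
  exact measure_le_inter_add_sdiff ν Y _

lemma FillingDomain.of_absolutelyContinuous (h : FillingDomain Γ ν Y) (hac : ν' ≪ ν)
    (hYfin : ν Y ≠ ∞) (hYfin' : ν' Y ≠ ∞) : FillingDomain Γ ν' Y := by
  intro ε hε
  have : IsFiniteMeasure (ν.restrict Y) := isFiniteMeasure_restrict.2 hYfin
  have : IsFiniteMeasure (ν'.restrict Y) := isFiniteMeasure_restrict.2 hYfin'
  obtain ⟨δ, hδ, hsmall⟩ := (hac.restrict Y).exists_pos_forall_measure_lt hε.ne'
  have hsmallY : ∀ s ⊆ Y, ν s < δ → ν' s < ε := fun s hs => by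
    simpa only [Measure.restrict_eq_self _ hs] using hsmall s
  obtain ⟨S, hS, hfill⟩ := h δ hδ
  refine ⟨S, hS, fun A hA hAY hεA => hsmallY _ Set.sdiff_subset (hfill A hA hAY ?_)⟩
  exact not_lt.1 fun hAδ => (hsmallY A hAY hAδ).not_ge hεA

lemma asymExpDomain_iff_fillingDomain (hmeas : ∀ γ : Γ, Measurable fun x : X => γ • x)
    (hYm : MeasurableSet Y) (hY0 : ν Y ≠ 0) (hYfin : ν Y ≠ ∞) :
    AsymExpDomain Γ ν Y ↔ FillingDomain Γ ν Y :=
  ⟨fun h => h.fillingDomain hmeas hYm hY0 hYfin, fun h => h.asymExpDomain hY0 hYfin⟩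

end Domains

theorem asymExpDomain_of_equivalent_measures_general
    {Γ X : Type*} [Group Γ] [MulAction Γ X] [MeasurableSpace X]
    (ν ν' : Measure X)
    (hac : ν ≪ ν') (hac' : ν' ≪ ν)
    (hmeas : ∀ γ : Γ, Measurable fun x : X => γ • x)
    (Y : Set X) (hYm : MeasurableSet Y)
    (hY0 : 0 < ν Y) (hYfin : ν Y < ⊤) (hY0' : 0 < ν' Y) (hYfin' : ν' Y < ⊤) :
    AsymExpDomain Γ ν Y ↔ AsymExpDomain Γ ν' Y := by
  rw [asymExpDomain_iff_fillingDomain hmeas hYm hY0.ne' hYfin.ne,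
    asymExpDomain_iff_fillingDomain hmeas hYm hY0'.ne' hYfin'.ne]
  exact ⟨fun h => h.of_absolutelyContinuous hac' hYfin.ne hYfin'.ne,
    fun h => h.of_absolutelyContinuous hac hYfin'.ne hYfin.ne⟩

/-- Lemma 3.7: being a domain of asymptotic expansion only depends on
the measure class. -/
theorem asymExpDomain_of_equivalent_measures
    {Γ X : Type*} [Group Γ] [Countable Γ] [MulAction Γ X] [MeasurableSpace X]
    (ν ν' : Measure X) [SigmaFinite ν] [SigmaFinite ν']
    (hac : ν ≪ ν') (hac' : ν' ≪ ν)
    (hmeas : ∀ γ : Γ, Measurable fun x : X => γ • x)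
    (Y : Set X) (hYm : MeasurableSet Y)
    (hY0 : 0 < ν Y) (hYfin : ν Y < ⊤) (hY0' : 0 < ν' Y) (hYfin' : ν' Y < ⊤) :
    AsymExpDomain Γ ν Y ↔ AsymExpDomain Γ ν' Y :=
  asymExpDomain_of_equivalent_measures_general ν ν' hac hac' hmeas Y hYm hY0 hYfin hY0' hYfin'
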